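/- arXiv:2302.13461 — 3 statements merged into one kernel-verified Lean document; each statement's English description precedes it below -/
import Mathlib

section
/- Let m ≡ 1 (mod 12) with m ≥ 13, v = 2^((m-1)/2) - 1, and let ā be an odd integer with 1 ≤ ā ≤ 2^((m-1)/2) - 1. Then the binary digit sum of ā·v equals (m-1)/2. -/
/-!
Write `v = 2^k - 1` with `k = (m - 1) / 2`. For `1 ≤ a ≤ 2^k` the product splits into
two `k`-digit blocks, `a * (2^k - 1) = (a - 1) * 2^k + (2^k - 1 - (a - 1))`, and the lower block
is the digitwise complement of the upper one, so together they carry exactly `k` ones.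
The same holds in every base `b`, with `k * (b - 1)` in place of `k`.
-/

namespace Nat

variable {b : ℕ}

theorem digits_sum_eq_mod_add_digits_sum_div (hb : 1 < b) (n : ℕ) :
    (digits b n).sum = n % b + (digits b (n / b)).sum := by
  rcases Nat.eq_zero_or_pos n with rfl | hn
  · simp
  · rw [digits_def' hb hn, List.sum_cons]

theorem digits_sum_mul_add_of_lt (hb : 1 < b) (n : ℕ) {d : ℕ} (hd : d < b) :
    (digits b (n * b + d)).sum = (digits b n).sum + d := by
  have hb0 : 0 < b := zero_lt_of_lt hb
  rw [digits_sum_eq_mod_add_digits_sum_div hb, add_comm (n * b), add_mul_mod_self_right,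
    add_mul_div_right _ _ hb0, mod_eq_of_lt hd, div_eq_of_lt hd, zero_add, add_comm]

theorem digits_sum_mul_pow_add (hb : 1 < b) (n : ℕ) {k c : ℕ} (hc : c < b ^ k) :
    (digits b (n * b ^ k + c)).sum = (digits b n).sum + (digits b c).sum := by
  induction k generalizing c with
  | zero => simp_all
  | succ k ih =>
    have hb0 : 0 < b := zero_lt_of_lt hb
    have hcb : c / b < b ^ k := (Nat.div_lt_iff_lt_mul hb0).2 (by rwa [← pow_succ])
    have hsplit : n * b ^ (k + 1) + c = (n * b ^ k + c / b) * b + c % b := by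
      rw [pow_succ, ← mul_assoc, add_mul, add_assoc, div_add_mod']
    have hc := digits_sum_mul_add_of_lt hb (c / b) (mod_lt c hb0)
    rw [div_add_mod'] at hc
    rw [hsplit, digits_sum_mul_add_of_lt hb _ (mod_lt c hb0), ih hcb, hc, add_assoc]

theorem digits_sum_pow_sub_one_sub_add_digits_sum (hb : 1 < b) {k c : ℕ} (hc : c < b ^ k) :
    (digits b (b ^ k - 1 - c)).sum + (digits b c).sum = k * (b - 1) := by
  induction k generalizing c with
  | zero => simp_all
  | succ k ih =>
    have hb0 : 0 < b := zero_lt_of_lt hb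
    set q := c / b
    set r := c % b
    have hr : r < b := mod_lt c hb0
    have hq : q < b ^ k := (Nat.div_lt_iff_lt_mul hb0).2 (by rwa [← pow_succ])
    have hc : c = q * b + r := (div_add_mod' c b).symm
    -- the complement of `q * b + r` is the complement of `q` followed by the digit `b - 1 - r`
    have hcompl : b ^ (k + 1) - 1 - c = (b ^ k - 1 - q) * b + (b - 1 - r) := by
      have hpow : b ^ (k + 1) = (b ^ k - 1 - q + q + 1) * b := by
        rw [pow_succ]; congr 1; omega
      rw [hpow, hc, add_mul, add_mul, one_mul]
      omega
    rw [hcompl, digits_sum_mul_add_of_lt hb _ (by omega), hc, digits_sum_mul_add_of_lt hb _ hr]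
    have hq_sum := ih hq
    rw [add_mul, one_mul]
    omega

theorem digits_sum_mul_pow_sub_one (hb : 1 < b) {k a : ℕ} (ha₀ : 1 ≤ a) (ha : a ≤ b ^ k) :
    (digits b (a * (b ^ k - 1))).sum = k * (b - 1) := by
  have hsplit : a * (b ^ k - 1) = (a - 1) * b ^ k + (b ^ k - 1 - (a - 1)) := by
    zify [ha₀, ha, one_le_pow k b (zero_lt_of_lt hb), (by omega : a - 1 ≤ b ^ k - 1)]
    ring
  have hlt : a - 1 < b ^ k := by omega
  rw [hsplit, digits_sum_mul_pow_add hb _ (by omega), add_comm,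
    digits_sum_pow_sub_one_sub_add_digits_sum hb hlt]

end Nat

theorem digitSum_oddMul_v_general (m : ℕ)
    (a : ℕ) (ha1 : 1 ≤ a) (ha2 : a ≤ 2 ^ ((m - 1) / 2) - 1) :
    (Nat.digits 2 (a * (2 ^ ((m - 1) / 2) - 1))).sum = (m - 1) / 2 := by
  simpa using Nat.digits_sum_mul_pow_sub_one one_lt_two ha1 (ha2.trans (Nat.sub_le _ _))

theorem digitSum_oddMul_v (m : ℕ) (hm : 13 ≤ m) (h : m % 12 = 1)
    (a : ℕ) (hodd : Odd a) (ha1 : 1 ≤ a) (ha2 : a ≤ 2 ^ ((m - 1) / 2) - 1) :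
    (Nat.digits 2 (a * (2 ^ ((m - 1) / 2) - 1))).sum = (m - 1) / 2 :=
  digitSum_oddMul_v_general m a ha1 ha2
end

section
/- Let m ≡ 5 (mod 12) with m ≥ 5, n = 2^m - 1, and v = 2^((m-1)/2) - 1. Then gcd(v, n) = 1, and for every integer a with 1 ≤ a ≤ 2^((m-1)/2), the binary digit sum of (a·v mod n) is congruent to 0, 1, or 2 modulo 6. -/
private lemma sumdig (x : ℕ) :
    (Nat.digits 2 x).sum = x % 2 + (Nat.digits 2 (x / 2)).sum := by
  rcases Nat.eq_zero_or_pos x with rfl | hx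
  · simp
  · rw [Nat.digits_def' (by norm_num : 1 < 2) hx]
    simp [List.sum_cons]

private lemma compl_sum : ∀ t y : ℕ, y < 2 ^ t →
    (Nat.digits 2 y).sum + (Nat.digits 2 (2 ^ t - 1 - y)).sum = t := by
  intro t
  induction t with
  | zero => intro y hy; interval_cases y; simp
  | succ t ih =>
    intro y hy
    have h2 : (2:ℕ) ^ (t+1) = 2 * 2 ^ t := by ring
    have hy2 : y / 2 < 2 ^ t := by omega
    have key := ih (y / 2) hy2
    have hz : 2 ^ (t+1) - 1 - y = 2 * (2 ^ t - 1 - y / 2) + (1 - y % 2) := by omega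
    rw [sumdig y, sumdig (2 ^ (t+1) - 1 - y), hz]
    have hmod : (2 * (2 ^ t - 1 - y / 2) + (1 - y % 2)) % 2 = 1 - y % 2 := by omega
    have hdiv : (2 * (2 ^ t - 1 - y / 2) + (1 - y % 2)) / 2 = 2 ^ t - 1 - y / 2 := by
      omega
    rw [hmod, hdiv]
    omega

private lemma split_sum : ∀ t y z : ℕ, y < 2 ^ t →
    (Nat.digits 2 (y + 2 ^ t * z)).sum = (Nat.digits 2 y).sum + (Nat.digits 2 z).sum := by
  intro t
  induction t with
  | zero => intro y z hy; interval_cases y; simp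
  | succ t ih =>
    intro y z hy
    have he : y + 2 ^ (t+1) * z = y + 2 * (2 ^ t * z) := by ring
    rw [he, sumdig (y + 2 * (2 ^ t * z)), sumdig y]
    have hmod : (y + 2 * (2 ^ t * z)) % 2 = y % 2 := by omega
    have hdiv : (y + 2 * (2 ^ t * z)) / 2 = y / 2 + 2 ^ t * z := by omega
    rw [hmod, hdiv, ih (y / 2) z (by omega)]
    omega

theorem m5mod12_defSet (m : ℕ) (hm : 5 ≤ m) (h : m % 12 = 5) :
    Nat.gcd (2 ^ ((m - 1) / 2) - 1) (2 ^ m - 1) = 1 ∧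
    ∀ a : ℕ, 1 ≤ a → a ≤ 2 ^ ((m - 1) / 2) →
      (Nat.digits 2 (a * (2 ^ ((m - 1) / 2) - 1) % (2 ^ m - 1))).sum % 6 = 0 ∨
      (Nat.digits 2 (a * (2 ^ ((m - 1) / 2) - 1) % (2 ^ m - 1))).sum % 6 = 1 ∨
      (Nat.digits 2 (a * (2 ^ ((m - 1) / 2) - 1) % (2 ^ m - 1))).sum % 6 = 2 := by
  set t := (m - 1) / 2 with ht
  have hmt : m = 2 * t + 1 := by omega
  have ht6 : t % 6 = 2 := by omega
  have hpow : (2:ℕ) ^ m = 2 * (2 ^ t * 2 ^ t) := by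
    rw [hmt]; ring
  have h2t : (4:ℕ) ≤ 2 ^ t := by
    calc (4:ℕ) = 2 ^ 2 := by norm_num
    _ ≤ 2 ^ t := Nat.pow_le_pow_right (by norm_num) (by omega)
  have hQQ : (2:ℕ) ^ t ≤ 2 ^ t * 2 ^ t := Nat.le_mul_of_pos_left _ (by omega)
  constructor
  · -- gcd part
    have hd1 : Nat.gcd (2 ^ t - 1) (2 ^ m - 1) ∣ 2 ^ t - 1 := Nat.gcd_dvd_left _ _
    have hd2 : Nat.gcd (2 ^ t - 1) (2 ^ m - 1) ∣ 2 ^ m - 1 := Nat.gcd_dvd_right _ _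
    have hfac : (2:ℕ) ^ t * 2 ^ t - 1 = (2 ^ t - 1) * (2 ^ t + 1) := by
      have := Nat.sq_sub_sq (2 ^ t) 1
      simp only [one_pow, pow_two, one_mul, mul_one] at this
      rw [this]; ring
    have hd3 : Nat.gcd (2 ^ t - 1) (2 ^ m - 1) ∣ 2 ^ t * 2 ^ t - 1 := by
      rw [hfac]; exact hd1.mul_right _
    have hone : (2:ℕ) ^ m - 1 - 2 * (2 ^ t * 2 ^ t - 1) = 1 := by omega
    have hfin := Nat.dvd_sub hd2 (hd3.mul_left 2)
    rw [hone] at hfin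
    exact Nat.dvd_one.mp hfin
  · intro a ha1 ha2
    have hlt : a * (2 ^ t - 1) < 2 ^ m - 1 := by
      have h1 : a * (2 ^ t - 1) ≤ 2 ^ t * (2 ^ t - 1) := Nat.mul_le_mul_right _ ha2
      have h2 : (2:ℕ) ^ t * (2 ^ t - 1) = 2 ^ t * 2 ^ t - 2 ^ t := by
        rw [Nat.mul_sub, Nat.mul_one]
      omega
    rw [Nat.mod_eq_of_lt hlt]
    have hexpr : a * (2 ^ t - 1) = (2 ^ t - a) + 2 ^ t * (a - 1) := by
      obtain ⟨b, hb⟩ := Nat.exists_eq_add_of_le ha1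
      obtain ⟨c, hc⟩ := Nat.exists_eq_add_of_le ha2
      subst hb
      rw [hc]
      have e1 : 1 + b + c - 1 = b + c := by omega
      have e2 : 1 + b + c - (1 + b) = c := by omega
      have e3 : 1 + b - 1 = b := by omega
      rw [e1, e2, e3]; ring
    rw [hexpr, split_sum t _ _ (by omega)]
    have hc := compl_sum t (a - 1) (by omega)
    have he : 2 ^ t - 1 - (a - 1) = 2 ^ t - a := by omega
    rw [he] at hc
    right; right
    omega
end

section
/- Let m ≡ 5 (mod 6) with m ≥ 5, n = 2^m - 1, and v = 2^((m+1)/2) - 1. Then gcd(v, n) = 1, and for every integer a with 1 ≤ a ≤ 2^((m-1)/2) + 2, the binary digit sum of (a·v mod n) is congruent to 0, 1, or 3 modulo 6. -/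
private lemma mers_mod (a b : ℕ) (hb : 0 < b) :
    (2 ^ a - 1) % (2 ^ b - 1) = 2 ^ (a % b) - 1 := by
  set r := a % b with hr
  have hrb : r < b := Nat.mod_lt _ hb
  have key : (2 ^ b - 1) ∣ (2 ^ a - 2 ^ r) := by
    have hab : a = b * (a / b) + r := (Nat.div_add_mod a b).symm
    rw [hab, pow_add, pow_mul]
    have h1 : ((2:ℕ) ^ b - 1) ∣ ((2 ^ b) ^ (a / b) - 1 ^ (a / b)) :=
      Nat.sub_dvd_pow_sub_pow _ _ _
    simp only [one_pow] at h1
    have h2 : ((2:ℕ) ^ b) ^ (a / b) * 2 ^ r - 2 ^ r = ((2 ^ b) ^ (a / b) - 1) * 2 ^ r := by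
      rw [Nat.sub_mul, one_mul]
    rw [h2]
    exact h1.mul_right _
  obtain ⟨c, hc⟩ := key
  have h2r : (2:ℕ) ^ r ≤ 2 ^ a := Nat.pow_le_pow_right (by norm_num) (Nat.mod_le a b)
  have hrlt : (2:ℕ) ^ r - 1 < 2 ^ b - 1 := by
    have h3 : (2:ℕ) ^ r < 2 ^ b := Nat.pow_lt_pow_right (by norm_num) hrb
    have h4 : (1:ℕ) ≤ 2 ^ r := Nat.one_le_pow _ _ (by norm_num)
    omega
  have h1r : (1:ℕ) ≤ 2 ^ r := Nat.one_le_pow _ _ (by norm_num)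
  have h5 : 2 ^ a - 1 = (2 ^ b - 1) * c + (2 ^ r - 1) := by omega
  rw [h5, Nat.mul_add_mod, Nat.mod_eq_of_lt hrlt]

private lemma mers_gcd (a b : ℕ) :
    Nat.gcd (2 ^ a - 1) (2 ^ b - 1) = 2 ^ (Nat.gcd a b) - 1 := by
  induction a using Nat.strong_induction_on generalizing b with
  | _ a ih =>
    rcases Nat.eq_zero_or_pos a with rfl | ha
    · simp
    · rw [Nat.gcd_rec, mers_mod b a ha, ih (b % a) (Nat.mod_lt _ ha) a,
        Nat.gcd_rec a b]

private lemma digits_pow_sub_one (k : ℕ) :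
    Nat.digits 2 (2 ^ k - 1) = List.replicate k 1 := by
  induction k with
  | zero => simp
  | succ k ih =>
    have h1 : (1:ℕ) ≤ 2 ^ k := Nat.one_le_pow _ _ (by norm_num)
    have hp : (2:ℕ) ^ (k+1) = 2 * 2 ^ k := by rw [pow_succ]; ring
    have hpos : 0 < 2 ^ (k+1) - 1 := by omega
    rw [Nat.digits_def' (by norm_num : 1 < 2) hpos]
    have hmod : (2 ^ (k+1) - 1) % 2 = 1 := by omega
    have hdiv : (2 ^ (k+1) - 1) / 2 = 2 ^ k - 1 := by omega
    rw [hmod, hdiv, ih, List.replicate_succ]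

private lemma sum_digits_split (j : ℕ) : ∀ y x : ℕ, x < 2 ^ j →
    (Nat.digits 2 (2 ^ j * y + x)).sum
      = (Nat.digits 2 y).sum + (Nat.digits 2 x).sum := by
  induction j with
  | zero => intro y x hx; interval_cases x; simp
  | succ j ih =>
    intro y x hx
    have hp : (2:ℕ) ^ (j+1) = 2 * 2 ^ j := by rw [pow_succ]; ring
    have hz : 2 ^ (j+1) * y = 2 * (2 ^ j * y) := by rw [hp]; ring
    rcases Nat.eq_zero_or_pos (2 ^ (j+1) * y + x) with h0 | hpos
    · have hy : 2 ^ j * y = 0 := by omega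
      have hy0 : y = 0 := by
        have := Nat.one_le_pow j 2 (by norm_num)
        rcases Nat.mul_eq_zero.mp hy with h | h <;> omega
      have hx0 : x = 0 := by omega
      simp [hy0, hx0]
    · rw [Nat.digits_def' (by norm_num : 1 < 2) hpos]
      have hmod : (2 ^ (j+1) * y + x) % 2 = x % 2 := by omega
      have hdiv : (2 ^ (j+1) * y + x) / 2 = 2 ^ j * y + x / 2 := by omega
      simp only [List.sum_cons]
      rw [hmod, hdiv, ih y (x / 2) (by omega)]
      rcases Nat.eq_zero_or_pos x with rfl | hxpos
      · simp
      · rw [Nat.digits_def' (by norm_num : 1 < 2) hxpos]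
        simp only [List.sum_cons]; omega

private lemma sum_digits_compl (k : ℕ) : ∀ x : ℕ, x < 2 ^ k →
    (Nat.digits 2 x).sum + (Nat.digits 2 (2 ^ k - 1 - x)).sum = k := by
  induction k with
  | zero => intro x hx; interval_cases x; simp
  | succ k ih =>
    intro x hx
    have hp : (2:ℕ) ^ (k+1) = 2 * 2 ^ k := by rw [pow_succ]; ring
    have h1 : (1:ℕ) ≤ 2 ^ k := Nat.one_le_pow _ _ (by norm_num)
    rcases Nat.eq_zero_or_pos x with rfl | hxpos
    · rw [Nat.sub_zero, digits_pow_sub_one]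
      simp [List.sum_replicate]
    · rcases Nat.eq_zero_or_pos (2 ^ (k+1) - 1 - x) with hy0 | hypos
      · have hxeq : x = 2 ^ (k+1) - 1 := by omega
        rw [hxeq, Nat.sub_self, digits_pow_sub_one]
        simp [List.sum_replicate]
      · rw [Nat.digits_def' (by norm_num : 1 < 2) hxpos,
          Nat.digits_def' (by norm_num : 1 < 2) hypos]
        have hdx : x / 2 < 2 ^ k := by omega
        have hyd : (2 ^ (k+1) - 1 - x) / 2 = 2 ^ k - 1 - x / 2 := by omega
        have hym : (2 ^ (k+1) - 1 - x) % 2 = 1 - x % 2 := by omega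
        have hih := ih (x / 2) hdx
        rw [hyd, hym]
        simp only [List.sum_cons]
        omega

theorem m5mod6_defSet (m : ℕ) (hm : 5 ≤ m) (h : m % 6 = 5) :
    Nat.gcd (2 ^ ((m + 1) / 2) - 1) (2 ^ m - 1) = 1 ∧
    ∀ a : ℕ, 1 ≤ a → a ≤ 2 ^ ((m - 1) / 2) + 2 →
      (Nat.digits 2 (a * (2 ^ ((m + 1) / 2) - 1) % (2 ^ m - 1))).sum % 6 = 0 ∨
      (Nat.digits 2 (a * (2 ^ ((m + 1) / 2) - 1) % (2 ^ m - 1))).sum % 6 = 1 ∨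
      (Nat.digits 2 (a * (2 ^ ((m + 1) / 2) - 1) % (2 ^ m - 1))).sum % 6 = 3 := by
  set k := (m + 1) / 2 with hk
  have hk3 : 3 ≤ k := by omega
  have hmk : m = 2 * k - 1 := by omega
  have hk1 : (m - 1) / 2 = k - 1 := by omega
  have hA1 : (1:ℕ) ≤ 2 ^ (k-1) := Nat.one_le_pow _ _ (by norm_num)
  have hBk : (2:ℕ) ^ k = 2 * 2 ^ (k-1) := by
    rw [← pow_succ']; congr 1; omega
  have hB1 : (1:ℕ) ≤ 2 ^ k := Nat.one_le_pow _ _ (by norm_num)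
  have hMk : (2:ℕ) ^ m = 2 ^ (k-1) * 2 ^ k := by
    rw [← pow_add]; congr 1; omega
  have hA4 : 4 ≤ 2 ^ (k-1) := by
    calc (4:ℕ) = 2 ^ 2 := by norm_num
    _ ≤ 2 ^ (k-1) := Nat.pow_le_pow_right (by norm_num) (by omega)
  have hM8 : 8 * 2 ^ (k-1) ≤ 2 ^ m := by
    rw [hMk, hBk]; nlinarith
  have hk6 : k % 6 = 0 ∨ k % 6 = 3 := by omega
  constructor
  · rw [mers_gcd]
    have hmodmk : m % k = k - 1 := by
      have h2 : m = (k-1) + k := by omega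
      rw [h2, Nat.add_mod_right, Nat.mod_eq_of_lt (by omega)]
    have hmod2 : k % (k-1) = 1 := by
      have h3 := Nat.add_mod_left (k-1) 1
      have h4 : (k-1) + 1 = k := by omega
      rw [h4] at h3
      rw [h3, Nat.mod_eq_of_lt (by omega)]
    have hg : Nat.gcd k m = 1 := by
      rw [Nat.gcd_rec, hmodmk, Nat.gcd_rec, hmod2, Nat.gcd_one_left]
    rw [hg]; rfl
  · intro a ha1 ha2
    rw [hk1] at ha2
    rcases Nat.lt_or_ge (2 ^ (k-1)) a with hgt | hle
    · have hexp : ∀ c : ℕ, (2 ^ (k-1) + c) * (2 ^ k - 1)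
          = 2 ^ (k-1) * 2 ^ k + c * 2 ^ k - 2 ^ (k-1) - c := by
        intro c
        have h2 : (2 ^ (k-1) + c) * (2 ^ k)
            = (2 ^ (k-1) + c) * (2 ^ k - 1) + (2 ^ (k-1) + c) := by
          nth_rewrite 1 [show (2:ℕ) ^ k = (2 ^ k - 1) + 1 by omega]; ring
        have h3 : (2 ^ (k-1) + c) * (2 ^ k) = 2 ^ (k-1) * 2 ^ k + c * 2 ^ k := by ring
        omega
      have haa : a = 2 ^ (k-1) + 1 ∨ a = 2 ^ (k-1) + 2 := by omega
      rcases haa with rfl | rfl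
      · have he := hexp 1
        have hval : (2 ^ (k-1) + 1) * (2 ^ k - 1) = (2 ^ m - 1) + 2 ^ (k-1) := by omega
        have hmod : (2 ^ (k-1) + 1) * (2 ^ k - 1) % (2 ^ m - 1) = 2 ^ (k-1) := by
          rw [hval, Nat.add_mod_left, Nat.mod_eq_of_lt (by omega)]
        rw [hmod]
        have hs := sum_digits_split (k-1) 1 0 (by positivity)
        simp only [mul_one, add_zero, Nat.digits_zero, List.sum_nil] at hs
        have hd1 : Nat.digits 2 1 = [1] := by
          rw [Nat.digits_def' (by norm_num : 1 < 2) (by norm_num)]; norm_num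
        rw [hd1] at hs
        simp only [List.sum_cons, List.sum_nil] at hs
        omega
      · have he := hexp 2
        have hval : (2 ^ (k-1) + 2) * (2 ^ k - 1)
            = (2 ^ m - 1) + (2 ^ k + 2 ^ (k-1) - 1) := by omega
        have hmod : (2 ^ (k-1) + 2) * (2 ^ k - 1) % (2 ^ m - 1)
            = 2 ^ k + 2 ^ (k-1) - 1 := by
          rw [hval, Nat.add_mod_left, Nat.mod_eq_of_lt (by omega)]
        rw [hmod]
        have hBA : 2 ^ k + 2 ^ (k-1) - 1 = 2 ^ k * 1 + (2 ^ (k-1) - 1) := by omega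
        rw [hBA]
        have hs := sum_digits_split k 1 (2 ^ (k-1) - 1) (by omega)
        rw [hs, digits_pow_sub_one (k-1)]
        have hd1 : Nat.digits 2 1 = [1] := by
          rw [Nat.digits_def' (by norm_num : 1 < 2) (by norm_num)]; norm_num
        rw [hd1]
        simp only [List.sum_cons, List.sum_nil, List.sum_replicate, smul_eq_mul, mul_one]
        omega
    · have hval : a * (2 ^ k - 1) = 2 ^ k * (a - 1) + (2 ^ k - a) := by
        have h2 : a * 2 ^ k = a * (2 ^ k - 1) + a := by
          nth_rewrite 1 [show (2:ℕ) ^ k = (2 ^ k - 1) + 1 by omega]; ring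
        have h3 : 2 ^ k * (a - 1) + 2 ^ k = 2 ^ k * a := by
          nth_rewrite 2 [show a = (a - 1) + 1 by omega]; ring
        have h4 : a * 2 ^ k = 2 ^ k * a := by ring
        omega
      have hmono : a * (2 ^ k - 1) ≤ 2 ^ (k-1) * (2 ^ k - 1) :=
        Nat.mul_le_mul_right _ hle
      have h5 : 2 ^ (k-1) * (2 ^ k - 1) + 2 ^ (k-1) = 2 ^ (k-1) * 2 ^ k := by
        nth_rewrite 2 [show (2:ℕ) ^ k = (2 ^ k - 1) + 1 by omega]; ring
      have hlt : a * (2 ^ k - 1) < 2 ^ m - 1 := by omega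
      rw [Nat.mod_eq_of_lt hlt, hval]
      have hs := sum_digits_split k (a - 1) (2 ^ k - a) (by omega)
      rw [hs]
      have hc := sum_digits_compl k (a - 1) (by omega)
      have hBa : 2 ^ k - 1 - (a - 1) = 2 ^ k - a := by omega
      rw [hBa] at hc
      omega
end
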